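/- Let (X,d) be a proper geodesic metric space and let Y ⊆ X be a C-contracting subset. Then for any two points x, y ∈ X and any a ∈ π_Y(x), b ∈ π_Y(y), if d(a,b) > C then d(x,y) ≥ d(x,a) + d(a,b) + d(b,y) − 8C. -/

import Mathlib

open Metric

/-- A geodesic parametrisation from `x` to `y`, with image `s`: an isometric embedding of
the interval `[0, dist x y]` sending the endpoints to `x` and `y`. -/
def IsGeodesicFromTo {X : Type*} [MetricSpace X] (s : Set X) (x y : X) : Prop :=
  ∃ γ : ℝ → X,
    (∀ u ∈ Set.Icc (0 : ℝ) (dist x y), ∀ v ∈ Set.Icc (0 : ℝ) (dist x y),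
      dist (γ u) (γ v) = |u - v|) ∧
    γ 0 = x ∧ γ (dist x y) = y ∧ s = γ '' Set.Icc (0 : ℝ) (dist x y)

/-- A geodesic segment: the image of an isometric embedding of a compact real interval. -/
def IsGeodesicSegment {X : Type*} [MetricSpace X] (s : Set X) : Prop :=
  ∃ x y : X, IsGeodesicFromTo s x y

/-- A metric space is geodesic if any two points are joined by a geodesic segment. -/
def GeodesicSpace (X : Type*) [MetricSpace X] : Prop :=
  ∀ x y : X, ∃ s : Set X, IsGeodesicFromTo s x y

/-- Closest point projection of a point to a subset:
`π_Y(x) = {y ∈ closure Y | d(x,y) = d(x,Y)}`. -/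
def projSet {X : Type*} [MetricSpace X] (Y : Set X) (x : X) : Set X :=
  {y ∈ closure Y | dist x y = Metric.infDist x Y}

/-- Closest point projection of a subset `B`: `π_Y(B) = ⋃_{x ∈ B} π_Y(x)`. -/
def projSetOf {X : Type*} [MetricSpace X] (Y B : Set X) : Set X :=
  ⋃ x ∈ B, projSet Y x

/-- The closed `r`-neighbourhood `N_r(A) = {x | d(x,A) ≤ r}`. -/
def ptNbhd {X : Type*} [MetricSpace X] (r : ℝ) (A : Set X) : Set X :=
  {x | Metric.infDist x A ≤ r}

/-- `Y` is `C`-contracting : for every geodesic segment `s` with `d(s,Y) ≥ C`,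
one has `diam (π_Y(s)) ≤ C`. -/
def IsContractingWith {X : Type*} [MetricSpace X] (C : ℝ) (Y : Set X) : Prop :=
  ∀ s : Set X, IsGeodesicSegment s → (∀ x ∈ s, C ≤ Metric.infDist x Y) →
    ∀ p ∈ projSetOf Y s, ∀ q ∈ projSetOf Y s, dist p q ≤ C

/-- `Y` is contracting if it is `C`-contracting for some `C ≥ 0`. -/
def IsContractingSet {X : Type*} [MetricSpace X] (Y : Set X) : Prop :=
  ∃ C : ℝ, 0 ≤ C ∧ IsContractingWith C Y

/-- `Y` and `Z` have `R`-bounded intersection for some gauge function `R`: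
`diam (N_r(Y) ∩ N_r(Z)) ≤ R r` for all `r ≥ 0`. -/
def HasBoundedIntersection {X : Type*} [MetricSpace X] (Y Z : Set X) : Prop :=
  ∃ R : ℝ → ℝ, ∀ r : ℝ, 0 ≤ r →
    ∀ p ∈ ptNbhd r Y ∩ ptNbhd r Z, ∀ q ∈ ptNbhd r Y ∩ ptNbhd r Z, dist p q ≤ R r

/-- The orbit `⟨g⟩ · o` of the basepoint under the cyclic subgroup generated by `g`. -/
def cyclicOrbit {G X : Type*} [Group G] [MetricSpace X] [MulAction G X] (g : G) (o : X) :
    Set X :=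
  Set.range fun n : ℤ => (g ^ n) • o

/-- `g` is a contracting element for the action: the orbit `⟨g⟩ · o` is a contracting
subset and `n ↦ gⁿ • o` is a quasi-isometric embedding of `ℤ`. -/
def IsContractingElement {G X : Type*} [Group G] [MetricSpace X] [MulAction G X]
    (o : X) (g : G) : Prop :=
  IsContractingSet (cyclicOrbit g o) ∧
    ∃ K c : ℝ, 1 ≤ K ∧ 0 ≤ c ∧ ∀ m n : ℤ,
      |(m : ℝ) - (n : ℝ)| / K - c ≤ dist ((g ^ m) • o) ((g ^ n) • o) ∧
      dist ((g ^ m) • o) ((g ^ n) • o) ≤ K * |(m : ℝ) - (n : ℝ)| + c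

/-- Two elements are weakly independent if their cyclic orbits have bounded intersection. -/
def WeaklyIndependent {G X : Type*} [Group G] [MetricSpace X] [MulAction G X]
    (o : X) (g h : G) : Prop :=
  HasBoundedIntersection (cyclicOrbit g o) (cyclicOrbit h o)

/-- The action of `G` on `X` has the contracting property: there exist two weakly
independent contracting elements. -/
def ContractingProperty (G : Type*) (X : Type*) [Group G] [MetricSpace X] [MulAction G X]
    (o : X) : Prop :=
  ∃ g h : G, IsContractingElement o g ∧ IsContractingElement o h ∧ WeaklyIndependent o g h

/-- Stable translation length `ℓ_d(g) = lim_n d(o, gⁿ • o)/n`; by subadditivity (Fekete's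
lemma) the limit exists and equals the infimum below. -/
noncomputable def stableLength {G X : Type*} [Group G] [MetricSpace X] [MulAction G X]
    (o : X) (g : G) : ℝ :=
  ⨅ n : ℕ+, dist o ((g ^ (n : ℕ)) • o) / ((n : ℕ) : ℝ)


/-! Follow a geodesic from `x` to `y`. Before it first comes within `C` of `Y`, and after it
last leaves that neighbourhood, the geodesic stays `C`-far from `Y`, so contraction moves the
projection by at most `C` along each of these two pieces: the entrance and exit points lie
within `2C` of `a` and `b`. If the geodesic never came within `C` of `Y`, contraction would
give `d(a, b) ≤ C`. The triangle inequality along the three pieces then loses at most `8C`. -/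

open Set

theorem exists_first_le_of_continuousOn {f : ℝ → ℝ} {c L : ℝ}
    (hf : ContinuousOn f (Icc 0 L)) (h0 : c ≤ f 0) (hT : ∃ t ∈ Icc 0 L, f t ≤ c) :
    ∃ τ ∈ Icc 0 L, f τ ≤ c ∧ (∀ u ∈ Icc 0 τ, c ≤ f u) ∧ ∀ t ∈ Icc 0 L, f t ≤ c → τ ≤ t := by
  set T := Icc 0 L ∩ f ⁻¹' Iic c
  have hT_closed : IsClosed T := hf.preimage_isClosed_of_isClosed isClosed_Icc isClosed_Iic
  have hT_bdd : BddBelow T := ⟨0, fun t ht => ht.1.1⟩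
  have hτ : sInf T ∈ T := hT_closed.csInf_mem hT hT_bdd
  have hfirst : ∀ t ∈ Icc 0 L, f t ≤ c → sInf T ≤ t := fun t ht hft => csInf_le hT_bdd ⟨ht, hft⟩
  refine ⟨sInf T, hτ.1, hτ.2, fun u hu => ?_, hfirst⟩
  by_contra! hlt
  have huL : u ∈ Icc 0 L := ⟨hu.1, hu.2.trans hτ.1.2⟩
  obtain ⟨w, hw, hfw⟩ := intermediate_value_Icc' hu.1
    (hf.mono (Icc_subset_Icc le_rfl huL.2)) ⟨hlt.le, h0⟩
  have hwu : w = u :=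
    le_antisymm hw.2 (hu.2.trans (hfirst w ⟨hw.1, hw.2.trans huL.2⟩ hfw.le))
  exact hlt.ne (hwu ▸ hfw)

section

variable {X : Type*} [MetricSpace X]

def IsGeodesicOn (γ : ℝ → X) (L : ℝ) : Prop :=
  ∀ u ∈ Icc 0 L, ∀ v ∈ Icc 0 L, dist (γ u) (γ v) = |u - v|

namespace IsGeodesicOn

variable {γ : ℝ → X} {L : ℝ}

theorem mono (hγ : IsGeodesicOn γ L) {τ : ℝ} (hτ : τ ≤ L) : IsGeodesicOn γ τ :=
  fun u hu v hv => hγ u (Icc_subset_Icc le_rfl hτ hu) v (Icc_subset_Icc le_rfl hτ hv)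

theorem reverse (hγ : IsGeodesicOn γ L) : IsGeodesicOn (fun u => γ (L - u)) L := by
  intro u hu v hv
  have hmem : ∀ w ∈ Icc 0 L, L - w ∈ Icc 0 L := fun w hw =>
    ⟨by linarith [hw.2], by linarith [hw.1]⟩
  rw [hγ _ (hmem u hu) _ (hmem v hv), abs_sub_comm]
  ring_nf

theorem dist_eq (hγ : IsGeodesicOn γ L) {u v : ℝ} (hu : 0 ≤ u) (huv : u ≤ v) (hv : v ≤ L) :
    dist (γ u) (γ v) = v - u := by
  rw [hγ u ⟨hu, huv.trans hv⟩ v ⟨hu.trans huv, hv⟩, abs_sub_comm, abs_of_nonneg (by linarith)]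

theorem continuousOn (hγ : IsGeodesicOn γ L) : ContinuousOn γ (Icc 0 L) :=
  (LipschitzOnWith.mk_one fun u hu v hv => by rw [hγ u hu v hv, Real.dist_eq]).continuousOn

theorem isGeodesicFromTo (hγ : IsGeodesicOn γ L) (hL : 0 ≤ L) :
    IsGeodesicFromTo (γ '' Icc 0 L) (γ 0) (γ L) := by
  have hd : dist (γ 0) (γ L) = L := by simpa using hγ.dist_eq le_rfl hL le_rfl
  unfold IsGeodesicFromTo
  rw [hd]
  exact ⟨γ, hγ, rfl, rfl, rfl⟩

end IsGeodesicOn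

theorem projSet_nonempty [ProperSpace X] {Y : Set X} (hY : (closure Y).Nonempty) (x : X) :
    (projSet Y x).Nonempty := by
  obtain ⟨y, hy, hyd⟩ := exists_mem_closure_infDist_eq_dist (closure_nonempty_iff.mp hY) x
  exact ⟨y, hy, hyd.symm⟩

namespace IsContractingWith

variable {C : ℝ} {Y : Set X} {γ : ℝ → X} {L : ℝ}

theorem dist_projSet_le (hY : IsContractingWith C Y) (hγ : IsGeodesicOn γ L) (hL : 0 ≤ L)
    (hfar : ∀ u ∈ Icc 0 L, C ≤ infDist (γ u) Y) {p q : X}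
    (hp : p ∈ projSet Y (γ 0)) (hq : q ∈ projSet Y (γ L)) : dist p q ≤ C := by
  have hfar' : ∀ z ∈ γ '' Icc 0 L, C ≤ infDist z Y := by
    rintro _ ⟨u, hu, rfl⟩
    exact hfar u hu
  exact hY _ ⟨_, _, hγ.isGeodesicFromTo hL⟩ hfar' p
    (mem_biUnion (mem_image_of_mem γ ⟨le_rfl, hL⟩) hp) q
    (mem_biUnion (mem_image_of_mem γ ⟨hL, le_rfl⟩) hq)

theorem exists_entrance [ProperSpace X] (hY : IsContractingWith C Y) (hγ : IsGeodesicOn γ L)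
    {a : X} (ha : a ∈ projSet Y (γ 0)) (hnear : ∃ t ∈ Icc 0 L, infDist (γ t) Y ≤ C) :
    ∃ τ ∈ Icc 0 L, infDist (γ τ) Y ≤ C ∧ dist (γ τ) a ≤ 2 * C ∧
      ∀ t ∈ Icc 0 L, infDist (γ t) Y ≤ C → τ ≤ t := by
  have hL : 0 ≤ L := by obtain ⟨t, ht, -⟩ := hnear; exact ht.1.trans ht.2
  rcases le_or_gt (infDist (γ 0) Y) C with h0 | h0
  · refine ⟨0, ⟨le_rfl, hL⟩, h0, ?_, fun t ht _ => ht.1⟩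
    linarith [ha.2, infDist_nonneg (x := γ 0) (s := Y)]
  obtain ⟨τ, hτ, hτnear, hfar, hfirst⟩ := exists_first_le_of_continuousOn
    ((continuous_infDist_pt Y).comp_continuousOn hγ.continuousOn) h0.le hnear
  obtain ⟨p, hp⟩ := projSet_nonempty ⟨a, ha.1⟩ (γ τ)
  have hap : dist a p ≤ C := hY.dist_projSet_le (hγ.mono hτ.2) hτ.1 hfar ha hp
  refine ⟨τ, hτ, hτnear, ?_, hfirst⟩
  calc dist (γ τ) a ≤ dist (γ τ) p + dist a p := dist_triangle_right _ _ _
    _ ≤ C + C := add_le_add (hp.2 ▸ hτnear) hap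
    _ = 2 * C := by ring

end IsContractingWith

end

theorem thin_quadrilateral_general {X : Type*}
    [MetricSpace X] [ProperSpace X] (hgeo : GeodesicSpace X)
    (Y : Set X) (C : ℝ) (hY : IsContractingWith C Y)
    (x y a b : X) (ha : a ∈ projSet Y x) (hb : b ∈ projSet Y y)
    (hab : C < dist a b) :
    dist x a + dist a b + dist b y - 8 * C ≤ dist x y := by
  obtain ⟨-, γ, hγ, hx, hy, -⟩ := hgeo x y
  set L := dist x y
  replace hγ : IsGeodesicOn γ L := hγ
  have ha' : a ∈ projSet Y (γ 0) := hx ▸ ha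
  have hb' : b ∈ projSet Y (γ L) := hy ▸ hb
  have hnear : ∃ t ∈ Icc 0 L, infDist (γ t) Y ≤ C := by
    by_contra! hfar
    exact hab.not_ge (hY.dist_projSet_le hγ dist_nonneg (fun u hu => (hfar u hu).le) ha' hb')
  obtain ⟨t₁, ht₁, ht₁near, hxa, hfirst⟩ := hY.exists_entrance hγ ha' hnear
  have hnear' : ∃ t ∈ Icc 0 L, infDist (γ (L - t)) Y ≤ C :=
    ⟨L - t₁, ⟨by linarith [ht₁.2], by linarith [ht₁.1]⟩, by rwa [sub_sub_cancel]⟩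
  obtain ⟨s, hs, hsnear, hyb, -⟩ :=
    hY.exists_entrance hγ.reverse (by rwa [sub_zero]) hnear'
  have ht₁₂ : t₁ ≤ L - s := hfirst _ ⟨by linarith [hs.2], by linarith [hs.1]⟩ hsnear
  have hx₁ : dist x (γ t₁) = t₁ := by simpa [hx] using hγ.dist_eq le_rfl ht₁.1 ht₁.2
  have h₁₂ : dist (γ t₁) (γ (L - s)) = L - s - t₁ :=
    hγ.dist_eq ht₁.1 ht₁₂ (by linarith [hs.1])
  have h₂y : dist (γ (L - s)) y = s := by
    simpa [hy] using hγ.dist_eq (ht₁.1.trans ht₁₂) (by linarith [hs.1]) le_rfl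
  linarith [dist_triangle x (γ t₁) a, dist_triangle4 a (γ t₁) (γ (L - s)) b,
    dist_triangle b (γ (L - s)) y, dist_comm a (γ t₁), dist_comm b (γ (L - s))]

/-- thin quadrilateral inequality for a `C`-contracting set `Y`: if
`a ∈ π_Y(x)`, `b ∈ π_Y(y)` and `d(a,b) > C`, then
`d(x,y) ≥ d(x,a) + d(a,b) + d(b,y) − 8C`. -/
theorem thin_quadrilateral {X : Type*}
    [MetricSpace X] [ProperSpace X] (hgeo : GeodesicSpace X)
    (Y : Set X) (C : ℝ) (hC : 0 ≤ C) (hY : IsContractingWith C Y)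
    (x y a b : X) (ha : a ∈ projSet Y x) (hb : b ∈ projSet Y y)
    (hab : C < dist a b) :
    dist x a + dist a b + dist b y - 8 * C ≤ dist x y :=
  thin_quadrilateral_general hgeo Y C hY x y a b ha hb hab
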